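/- arXiv:2110.10604 — 2 statements merged into one kernel-verified Lean document; each statement's English description precedes it below -/
import Mathlib

section
/- For any function h : Ω → ℝ such that h·f is μ-integrable, the importance-weighted expectation under the multiset sampling density equals the expectation under the target density: ∫_{Ω^M} (Σ_{m=1}^M w_m(Θ) h(θ_m)) π(Θ) dμ^M(Θ) = ∫_Ω h(θ) f(θ) dμ(θ), where on {π = 0} the integrand on the left is taken to be 0. Equivalently, ∫_{Ω^M} (1/M) Σ_{m=1}^M h(θ_m) f(θ_m) ∏_{l≠m} g_l(θ_l) dμ^M(Θ) = ∫_Ω h f dμ. -/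
/-!
Expanding `π` and the weights, the left-hand integrand is `(1/M) Σₘ h(θₘ) f(θₘ) ∏_{l≠m} g_l(θ_l)`
(on `{π = 0}` every summand vanishes because all of them are nonnegative). By Fubini each
summand integrates to `(∫ h f) ∏_{l≠m} ∫ g_l = ∫ h f`, and averaging `M` copies gives `∫ h f`.
-/

open MeasureTheory Finset

theorem Finset.prod_apply_update_eq_mul_prod_erase {ι R : Type*} {β : ι → Type*} [Fintype ι]
    [DecidableEq ι] [CommMonoid R] (F : (i : ι) → β i → R) (f : (i : ι) → β i) (m : ι)
    (b : β m) :
    ∏ i, F i (Function.update f m b i) = F m b * ∏ i ∈ univ.erase m, F i (f i) := by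
  rw [← mul_prod_erase univ _ (mem_univ m), Function.update_self]
  congr 1
  exact prod_congr rfl fun i hi => by rw [Function.update_of_ne (ne_of_mem_erase hi)]

namespace MeasureTheory

section Pi

variable {ι 𝕜 : Type*} [Fintype ι] [DecidableEq ι] [RCLike 𝕜] {E : ι → Type*}
  {mE : ∀ i, MeasurableSpace (E i)} {μ : (i : ι) → Measure (E i)} [∀ i, SigmaFinite (μ i)]

theorem Integrable.mul_prod_erase_pi {f : (i : ι) → E i → 𝕜} {m : ι} {φ : E m → 𝕜}
    (hφ : Integrable φ (μ m)) (hf : ∀ i ≠ m, Integrable (f i) (μ i)) :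
    Integrable (fun x : (i : ι) → E i ↦ φ (x m) * ∏ i ∈ univ.erase m, f i (x i))
      (Measure.pi μ) := by
  have hupdate : ∀ i, Integrable (Function.update f m φ i) (μ i) := by
    intro i
    rcases eq_or_ne i m with rfl | hi
    · rwa [Function.update_self]
    · rw [Function.update_of_ne hi]
      exact hf i hi
  have hprod : (fun x : (i : ι) → E i ↦ ∏ i, Function.update f m φ i (x i))
      = fun x ↦ φ (x m) * ∏ i ∈ univ.erase m, f i (x i) :=
    funext fun x ↦ prod_apply_update_eq_mul_prod_erase (fun i (u : E i → 𝕜) ↦ u (x i)) f m φ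
  exact hprod ▸ Integrable.fintype_prod_dep hupdate

theorem integral_mul_prod_erase_pi (f : (i : ι) → E i → 𝕜) (m : ι) (φ : E m → 𝕜) :
    ∫ x, φ (x m) * ∏ i ∈ univ.erase m, f i (x i) ∂(Measure.pi μ)
      = (∫ y, φ y ∂(μ m)) * ∏ i ∈ univ.erase m, ∫ y, f i y ∂(μ i) := by
  simp_rw [← fun x : (i : ι) → E i ↦
    prod_apply_update_eq_mul_prod_erase (fun i (u : E i → 𝕜) ↦ u (x i)) f m φ]
  rw [integral_fintype_prod_eq_prod]
  exact prod_apply_update_eq_mul_prod_erase (fun i (u : E i → 𝕜) ↦ ∫ y, u y ∂(μ i)) f m φ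

end Pi

theorem integral_average_mul_prod_erase_pi {ι 𝕜 Ω : Type*} [Fintype ι] [DecidableEq ι]
    [Nonempty ι] [RCLike 𝕜] [MeasurableSpace Ω] {μ : Measure Ω} [SigmaFinite μ]
    {g : ι → Ω → 𝕜} (hg : ∀ i, ∫ y, g i y ∂μ = 1) {φ : Ω → 𝕜} (hφ : Integrable φ μ) :
    ∫ x, (1 / (Fintype.card ι : 𝕜)) * ∑ m, φ (x m) * ∏ i ∈ univ.erase m, g i (x i)
        ∂(Measure.pi fun _ ↦ μ)
      = ∫ y, φ y ∂μ := by
  have hg_int : ∀ i, Integrable (g i) μ := fun i ↦ .of_integral_ne_zero (by simp [hg i])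
  have hterm : ∀ m : ι,
      ∫ x, φ (x m) * ∏ i ∈ univ.erase m, g i (x i) ∂(Measure.pi fun _ ↦ μ) = ∫ y, φ y ∂μ := by
    intro m
    rw [integral_mul_prod_erase_pi, prod_eq_one fun i _ ↦ hg i, mul_one]
  rw [integral_const_mul,
    integral_finsetSum _ fun m _ ↦ hφ.mul_prod_erase_pi fun i _ ↦ hg_int i,
    sum_congr rfl fun m _ ↦ hterm m, sum_const, card_univ, nsmul_eq_mul]
  field_simp

end MeasureTheory

theorem ite_sum_weight_mul_mul_eq {ι : Type*} [Fintype ι] {M P : ℝ} (hM : M ≠ 0)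
    {a b w : ι → ℝ} (ha : ∀ m, 0 ≤ a m) (hP : P = 1 / M * ∑ m, a m)
    (hw : P ≠ 0 → ∀ m, w m = a m / (M * P)) :
    (if P = 0 then 0 else (∑ m, w m * b m) * P) = 1 / M * ∑ m, b m * a m := by
  split_ifs with hP0
  · have hsum : ∑ m, a m = 0 := by simpa [hM, hP0] using hP
    have ha0 : ∀ m, a m = 0 := fun m ↦
      (sum_eq_zero_iff_of_nonneg fun m _ ↦ ha m).mp hsum m (mem_univ m)
    simp [ha0]
  · rw [sum_mul, mul_sum]
    refine sum_congr rfl fun m _ ↦ ?_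
    rw [hw hP0 m]
    field_simp

theorem gmss_importance_weighted_expectation_general
    {Ω : Type*} [MeasurableSpace Ω] (μ : Measure Ω) [SigmaFinite μ]
    (M : ℕ) (hM : 0 < M)
    (f : Ω → ℝ) (g : Fin M → Ω → ℝ)
    (hf_nonneg : ∀ x, 0 ≤ f x)
    (hg_nonneg : ∀ l x, 0 ≤ g l x)
    (hg_prob : ∀ l, ∫ x, g l x ∂μ = 1)
    (π : (Fin M → Ω) → ℝ)
    (hπ : ∀ Θ, π Θ = (1 / (M : ℝ)) *
      ∑ m : Fin M, f (Θ m) * ∏ l ∈ Finset.univ.erase m, g l (Θ l))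
    (w : Fin M → (Fin M → Ω) → ℝ)
    (hw : ∀ m Θ, π Θ ≠ 0 →
      w m Θ = f (Θ m) * (∏ l ∈ Finset.univ.erase m, g l (Θ l)) / ((M : ℝ) * π Θ))
    (h : Ω → ℝ)
    (hhf_int : Integrable (fun θ => h θ * f θ) μ) :
    (∫ Θ, (if π Θ = 0 then 0 else (∑ m : Fin M, w m Θ * h (Θ m)) * π Θ)
        ∂(Measure.pi fun _ : Fin M => μ))
      = ∫ θ, h θ * f θ ∂μ ∧
    (∫ Θ, (1 / (M : ℝ)) *
        ∑ m : Fin M, h (Θ m) * f (Θ m) * ∏ l ∈ Finset.univ.erase m, g l (Θ l)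
        ∂(Measure.pi fun _ : Fin M => μ))
      = ∫ θ, h θ * f θ ∂μ := by
  have : Nonempty (Fin M) := ⟨⟨0, hM⟩⟩
  have average := integral_average_mul_prod_erase_pi (μ := μ) hg_prob hhf_int
  rw [Fintype.card_fin] at average
  refine ⟨?_, average⟩
  rw [← average]
  refine integral_congr_ae (Filter.Eventually.of_forall fun Θ ↦ ?_)
  simp_rw [mul_assoc (h _)]
  exact ite_sum_weight_mul_mul_eq (Nat.cast_ne_zero.mpr hM.ne')
    (fun m ↦ mul_nonneg (hf_nonneg _) (prod_nonneg fun l _ ↦ hg_nonneg l _)) (hπ Θ)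
    (fun hΘ m ↦ hw m Θ hΘ)

/-- Theorem 1 of Kim et al. (GMSS): the importance-weighted expectation under the
multiset sampling density equals the expectation under the target density. -/
theorem gmss_importance_weighted_expectation
    {Ω : Type*} [MeasurableSpace Ω] (μ : Measure Ω) [SigmaFinite μ]
    (M : ℕ) (hM : 0 < M)
    (f : Ω → ℝ) (g : Fin M → Ω → ℝ)
    (hf_meas : Measurable f) (hf_nonneg : ∀ x, 0 ≤ f x)
    (hf_prob : ∫ x, f x ∂μ = 1)
    (hg_meas : ∀ l, Measurable (g l)) (hg_nonneg : ∀ l x, 0 ≤ g l x)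
    (hg_prob : ∀ l, ∫ x, g l x ∂μ = 1)
    (π : (Fin M → Ω) → ℝ)
    (hπ : ∀ Θ, π Θ = (1 / (M : ℝ)) *
      ∑ m : Fin M, f (Θ m) * ∏ l ∈ Finset.univ.erase m, g l (Θ l))
    (w : Fin M → (Fin M → Ω) → ℝ)
    (hw : ∀ m Θ, π Θ ≠ 0 →
      w m Θ = f (Θ m) * (∏ l ∈ Finset.univ.erase m, g l (Θ l)) / ((M : ℝ) * π Θ))
    (h : Ω → ℝ) (hh_meas : Measurable h)
    (hhf_int : Integrable (fun θ => h θ * f θ) μ) :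
    (∫ Θ, (if π Θ = 0 then 0 else (∑ m : Fin M, w m Θ * h (Θ m)) * π Θ)
        ∂(Measure.pi fun _ : Fin M => μ))
      = ∫ θ, h θ * f θ ∂μ ∧
    (∫ Θ, (1 / (M : ℝ)) *
        ∑ m : Fin M, h (Θ m) * f (Θ m) * ∏ l ∈ Finset.univ.erase m, g l (Θ l)
        ∂(Measure.pi fun _ : Fin M => μ))
      = ∫ θ, h θ * f θ ∂μ :=
  gmss_importance_weighted_expectation_general μ M hM f g hf_nonneg hg_nonneg hg_prob π hπ w hw h
    hhf_int
end

section
/- For each index m ∈ {1,…,M} and every θ_m ∈ Ω, the marginal density of the m-th multiset element under π is a mixture of the target and the instrumental density: ∫_{Ω^{M−1}} π(θ₁,…,θ_M) ∏_{l≠m} dμ(θ_l) = (1/M) f(θ_m) + (1 − 1/M) g_m(θ_m). -/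
/-!
Each summand of `π` factorises over the coordinates, with `f` in slot `k` and `g_l` in every other
slot. Fixing `θ_m` and integrating out the other coordinates (Fubini on the product measure) leaves
the `m`-th factor at `θ_m` times integrals that all equal `1`: this is `f θ_m` for `k = m` and
`g_m θ_m` for each of the `M - 1` indices `k ≠ m`.
-/

open MeasureTheory

section

variable {ι Ω : Type*} [Fintype ι] [DecidableEq ι]

theorem prod_apply_dite_eq_mul_prod_subtype_ne {R : Type*} [CommMonoid R]
    (h : ι → Ω → R) (m : ι) (θ : Ω) (η : { l : ι // l ≠ m } → Ω) :
    ∏ l, h l (if hl : l = m then θ else η ⟨l, hl⟩) =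
      h m θ * ∏ i : { l : ι // l ≠ m }, h i (η i) := by
  rw [Fintype.prod_eq_mul_prod_subtype_ne _ m, dif_pos rfl]
  exact congrArg _ (Finset.prod_congr rfl fun i _ => by rw [dif_neg i.2])

variable [MeasurableSpace Ω] (μ : ι → Measure Ω) [∀ i, SigmaFinite (μ i)]
  (h : ι → Ω → ℝ) (m : ι) (θ : Ω)

theorem integrable_prod_apply_dite (hh : ∀ i, Integrable (h i) (μ i)) :
    Integrable (fun η : { l : ι // l ≠ m } → Ω =>
      ∏ l, h l (if hl : l = m then θ else η ⟨l, hl⟩))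
      (Measure.pi fun i : { l : ι // l ≠ m } => μ i) := by
  simp_rw [prod_apply_dite_eq_mul_prod_subtype_ne]
  exact (Integrable.fintype_prod (f := fun i : { l : ι // l ≠ m } => h i)
    fun i => hh i).const_mul _

theorem integral_prod_apply_dite :
    ∫ η : { l : ι // l ≠ m } → Ω, ∏ l, h l (if hl : l = m then θ else η ⟨l, hl⟩)
        ∂(Measure.pi fun i : { l : ι // l ≠ m } => μ i)
      = h m θ * ∏ i : { l : ι // l ≠ m }, ∫ x, h i x ∂(μ i) := by
  simp_rw [prod_apply_dite_eq_mul_prod_subtype_ne]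
  rw [integral_const_mul, integral_fintype_prod_eq_prod]

end

theorem mul_prod_erase_eq_prod_update {ι α R : Type*} [Fintype ι] [DecidableEq ι]
    [CommMonoid R] (f : α → R) (g : ι → α → R) (k : ι) (Θ : ι → α) :
    f (Θ k) * ∏ l ∈ Finset.univ.erase k, g l (Θ l) =
      ∏ l, Function.update g k f l (Θ l) := by
  rw [← Finset.mul_prod_erase _ _ (Finset.mem_univ k), Function.update_self]
  exact congrArg _ (Finset.prod_congr rfl fun l hl => by
    rw [Function.update_of_ne (Finset.ne_of_mem_erase hl)])

theorem sum_update_apply_add {ι α R : Type*} [Fintype ι] [DecidableEq ι] [AddCommMonoid R]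
    (f : α → R) (g : ι → α → R) (m : ι) (x : α) :
    ∑ k, Function.update g k f m x + g m x = f x + Fintype.card ι • g m x := by
  rw [← Finset.card_univ, ← Finset.sum_const, Fintype.sum_eq_add_sum_subtype_ne _ m,
    Fintype.sum_eq_add_sum_subtype_ne (fun _ => g m x) m, Function.update_self]
  have h_ne (k : { l : ι // l ≠ m }) : Function.update g k f m x = g m x := by
    rw [Function.update_of_ne (Ne.symm k.2)]
  simp only [h_ne]
  abel

theorem gmss_marginal_density_mixture_general
    {Ω : Type*} [MeasurableSpace Ω] (μ : Measure Ω) [SigmaFinite μ]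
    (M : ℕ)
    (f : Ω → ℝ) (g : Fin M → Ω → ℝ)
    (hf_prob : ∫ x, f x ∂μ = 1)
    (hg_prob : ∀ l, ∫ x, g l x ∂μ = 1)
    (π : (Fin M → Ω) → ℝ)
    (hπ : ∀ Θ, π Θ = (1 / (M : ℝ)) *
      ∑ m : Fin M, f (Θ m) * ∏ l ∈ Finset.univ.erase m, g l (Θ l))
    (m : Fin M) (θ : Ω) :
    ∫ η : { l : Fin M // l ≠ m } → Ω,
        π (fun l => if hl : l = m then θ else η ⟨l, hl⟩)
        ∂(Measure.pi fun _ : { l : Fin M // l ≠ m } => μ)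
      = (1 / (M : ℝ)) * f θ + (1 - 1 / (M : ℝ)) * g m θ := by
  have h_prob (k l : Fin M) : ∫ x, Function.update g k f l x ∂μ = 1 := by
    rcases eq_or_ne l k with rfl | hlk
    · rwa [Function.update_self]
    · rw [Function.update_of_ne hlk, hg_prob]
  have hπ_update (Θ : Fin M → Ω) :
      π Θ = 1 / (M : ℝ) * ∑ k, ∏ l, Function.update g k f l (Θ l) := by
    simp only [hπ, mul_prod_erase_eq_prod_update]
  simp_rw [hπ_update]
  rw [integral_const_mul, integral_finsetSum _ fun k _ => integrable_prod_apply_dite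
    (fun _ => μ) _ m θ fun i => integrable_of_integral_eq_one (h_prob k i)]
  simp_rw [integral_prod_apply_dite (fun _ => μ), h_prob, Finset.prod_const_one, mul_one]
  have h_sum := sum_update_apply_add f g m θ
  rw [Fintype.card_fin, nsmul_eq_mul] at h_sum
  have hM : (M : ℝ) ≠ 0 := Nat.cast_ne_zero.2 (Fin.pos m).ne'
  field_simp
  linear_combination h_sum

/-- The marginal sampling density of the m-th multiset element is the mixture
`(1/M) f + (1 - 1/M) g_m`. -/
theorem gmss_marginal_density_mixture
    {Ω : Type*} [MeasurableSpace Ω] (μ : Measure Ω) [SigmaFinite μ]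
    (M : ℕ) (hM : 0 < M)
    (f : Ω → ℝ) (g : Fin M → Ω → ℝ)
    (hf_meas : Measurable f) (hf_nonneg : ∀ x, 0 ≤ f x)
    (hf_prob : ∫ x, f x ∂μ = 1)
    (hg_meas : ∀ l, Measurable (g l)) (hg_nonneg : ∀ l x, 0 ≤ g l x)
    (hg_prob : ∀ l, ∫ x, g l x ∂μ = 1)
    (π : (Fin M → Ω) → ℝ)
    (hπ : ∀ Θ, π Θ = (1 / (M : ℝ)) *
      ∑ m : Fin M, f (Θ m) * ∏ l ∈ Finset.univ.erase m, g l (Θ l))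
    (m : Fin M) (θ : Ω) :
    ∫ η : { l : Fin M // l ≠ m } → Ω,
        π (fun l => if hl : l = m then θ else η ⟨l, hl⟩)
        ∂(Measure.pi fun _ : { l : Fin M // l ≠ m } => μ)
      = (1 / (M : ℝ)) * f θ + (1 - 1 / (M : ℝ)) * g m θ :=
  gmss_marginal_density_mixture_general μ M f g hf_prob hg_prob π hπ m θ
end
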